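/- Assume the origin of the system ė = F(e) is locally exponentially stable and globally attractive. Then there exist a positive real number λ and a continuous strictly increasing function k : ℝ₊ → ℝ₊ such that |E(e,t)| ≤ k(|e|) exp(−λ t)|e| for all e in ℝ^{n} and all t ≥ 0. -/

import Mathlib

/-!
Global attractivity brings every trajectory into the ball of radius `r₁`, after which the local
exponential estimate takes over. Since `F` is locally Lipschitz, Gronwall's inequality makes the
trajectories depend continuously on the initial state, so the time needed to enter that ball is
locally uniform, and by compactness every ball of initial states admits a single bound
`C exp (-λ₁ t)`. The best gain on the ball of radius `s` is monotone in `s`; averaging it over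
`[s, s + 1]` gives the continuous strictly increasing `k`.
-/

open Real Set Filter
open scoped RealInnerProductSpace Topology

/-- Euclidean state space ℝⁿ. -/
abbrev Euc (n : ℕ) := EuclideanSpace ℝ (Fin n)

open Metric
open scoped NNReal

theorem ContinuousOn.forall_lt_of_bootstrap {g : ℝ → ℝ} {a b R : ℝ}
    (hg : ContinuousOn g (Icc a b)) (ha : g a < R)
    (hstep : ∀ t ∈ Icc a b, (∀ s ∈ Icc a t, g s ≤ R) → g t < R) :
    ∀ t ∈ Icc a b, g t < R := by
  by_contra! ⟨t₁, ht₁, hR⟩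
  set S := Icc a b ∩ g ⁻¹' Ici R
  have hS : IsClosed S := hg.preimage_isClosed_of_isClosed isClosed_Icc isClosed_Ici
  have hτ : sInf S ∈ S := hS.csInf_mem ⟨t₁, ht₁, hR⟩ ⟨a, fun t ht => ht.1.1⟩
  have hbefore : ∀ s ∈ Ico a (sInf S), g s < R := fun s hs =>
    lt_of_not_ge fun h => hs.2.not_ge (csInf_le ⟨a, fun t ht => ht.1.1⟩
      ⟨⟨hs.1, hs.2.le.trans hτ.1.2⟩, h⟩)
  have haτ : a < sInf S := hτ.1.1.lt_of_ne fun h => (h ▸ ha).not_ge hτ.2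
  -- the first time `g` reaches `R` is approached from the left by times where `g < R`
  have hat : g (sInf S) ≤ R := by
    have : (𝓝[Ico a (sInf S)] sInf S).NeBot := by
      rw [← mem_closure_iff_nhdsWithin_neBot, closure_Ico haτ.ne]
      exact right_mem_Icc.2 haτ.le
    exact le_of_tendsto ((hg _ hτ.1).mono fun s hs => ⟨hs.1, hs.2.le.trans hτ.1.2⟩)
      (eventually_nhdsWithin_of_forall fun s hs => (hbefore s hs).le)
  refine (hstep _ hτ.1 fun s hs => ?_).not_ge hτ.2
  rcases hs.2.lt_or_eq with h | h
  · exact (hbefore s ⟨hs.1, h⟩).le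
  · exact h ▸ hat

theorem Monotone.exists_continuous_strictMono_lt {B : ℝ → ℝ} (hB : Monotone B) :
    ∃ k : ℝ → ℝ, Continuous k ∧ StrictMono k ∧ ∀ s, B s < k s := by
  have hint : ∀ a b, IntervalIntegrable B MeasureTheory.volume a b :=
    fun _ _ => hB.intervalIntegrable
  have hcont : Continuous fun s => ∫ u in s..s + 1, B u := by
    have hprim := intervalIntegral.continuous_primitive hint 0
    have : (fun s => ∫ u in s..s + 1, B u) =
        fun s => (∫ u in 0..s + 1, B u) - ∫ u in 0..s, B u :=
      funext fun s => (intervalIntegral.integral_interval_sub_left (hint 0 _) (hint 0 _)).symm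
    rw [this]
    exact (hprim.comp (continuous_add_const 1)).sub hprim
  have hshift : ∀ a, ∫ u in a..a + 1, B u = ∫ u in (0 : ℝ)..1, B (a + u) := fun a => by
    rw [intervalIntegral.integral_comp_add_left, add_zero]
  have hmono : Monotone fun s => ∫ u in s..s + 1, B u := fun s s' hss' => by
    simp only [hshift]
    exact intervalIntegral.integral_mono_on zero_le_one
      (hB.comp (monotone_id.const_add s)).intervalIntegrable
      (hB.comp (monotone_id.const_add s')).intervalIntegrable fun u _ => hB (by linarith)
  refine ⟨fun s => (∫ u in s..s + 1, B u) + exp s, hcont.add continuous_exp,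
    hmono.add_strictMono exp_strictMono, fun s => ?_⟩
  calc B s = ∫ _ in s..s + 1, B s := by simp
    _ ≤ ∫ u in s..s + 1, B u := intervalIntegral.integral_mono_on (by linarith)
        intervalIntegrable_const (hint _ _) fun u hu => hB hu.1
    _ < (∫ u in s..s + 1, B u) + exp s := lt_add_of_pos_right _ (exp_pos s)

section ExpGain

variable {E : Type*} [SeminormedAddCommGroup E] {Efl : E → ℝ → E} {lam s c : ℝ}

def IsExpGainOn (Efl : E → ℝ → E) (lam s c : ℝ) : Prop :=
  ∀ e t, 0 ≤ t → ‖e‖ ≤ s → ‖Efl e t‖ ≤ c * exp (-lam * t) * ‖e‖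

theorem IsExpGainOn.mono {s' : ℝ} (h : IsExpGainOn Efl lam s' c) (hs : s ≤ s') :
    IsExpGainOn Efl lam s c :=
  fun e t ht he => h e t ht (he.trans hs)

noncomputable def expGain (Efl : E → ℝ → E) (lam s : ℝ) : ℝ :=
  sInf {c | 0 ≤ c ∧ IsExpGainOn Efl lam s c}

theorem expGain_nonneg (s : ℝ) : 0 ≤ expGain Efl lam s :=
  Real.sInf_nonneg fun _ hc => hc.1

theorem monotone_expGain (h : ∀ s, ∃ c, 0 ≤ c ∧ IsExpGainOn Efl lam s c) :
    Monotone (expGain Efl lam) := fun _ s' hs =>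
  csInf_le_csInf ⟨0, fun _ hc => hc.1⟩ (h s') fun _ hc => ⟨hc.1, hc.2.mono hs⟩

theorem isExpGainOn_expGain (h : ∀ s, ∃ c, 0 ≤ c ∧ IsExpGainOn Efl lam s c) (s : ℝ) :
    IsExpGainOn Efl lam s (expGain Efl lam s) := by
  intro e t ht he
  obtain ⟨c, hc⟩ := h s
  have hgain : ∀ c' ∈ {c | 0 ≤ c ∧ IsExpGainOn Efl lam s c},
      ‖Efl e t‖ ≤ c' * (exp (-lam * t) * ‖e‖) :=
    fun c' hc' => mul_assoc c' _ _ ▸ hc'.2 e t ht he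
  rw [mul_assoc]
  rcases (by positivity : 0 ≤ exp (-lam * t) * ‖e‖).eq_or_lt with ha | ha
  · simpa only [← ha, mul_zero] using hgain c hc
  · rw [← div_le_iff₀ ha]
    exact le_csInf ⟨c, hc⟩ fun c' hc' => (div_le_iff₀ ha).2 (hgain c' hc')

end ExpGain

section ODE

variable {E : Type*} [NormedAddCommGroup E] [NormedSpace ℝ E]

def IsForwardSolution (F : E → E) (f : ℝ → E) : Prop :=
  ∀ t, 0 ≤ t → HasDerivWithinAt f (F (f t)) (Ici 0) t

namespace IsForwardSolution

variable {F : E → E} {f g : ℝ → E}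

theorem continuousOn (hf : IsForwardSolution F f) : ContinuousOn f (Ici 0) :=
  fun t ht => (hf t ht).continuousWithinAt

theorem hasDerivWithinAt_Ici (hf : IsForwardSolution F f) {t : ℝ} (ht : 0 ≤ t) :
    HasDerivWithinAt f (F (f t)) (Ici t) t :=
  (hf t ht).mono (Ici_subset_Ici.2 ht)

theorem exists_bound (hf : IsForwardSolution F f) (T : ℝ) :
    ∃ M, ∀ t ∈ Icc 0 T, ‖f t‖ ≤ M :=
  isCompact_Icc.exists_bound_of_continuousOn (hf.continuousOn.mono Icc_subset_Ici_self)

theorem comp_const_add (hf : IsForwardSolution F f) {T : ℝ} (hT : 0 ≤ T) :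
    IsForwardSolution F (fun s => f (T + s)) := fun t ht => by
  simpa [Function.comp_def] using (hf (T + t) (by positivity)).scomp t
    ((hasDerivAt_id t).const_add T).hasDerivWithinAt fun s hs => by simp [add_nonneg hT hs]

theorem dist_le_of_lipschitzOnWith {K : ℝ≥0} {S : Set E} (hF : LipschitzOnWith K F S)
    (hf : IsForwardSolution F f) (hg : IsForwardSolution F g) {T : ℝ}
    (hfS : ∀ t ∈ Icc 0 T, f t ∈ S) (hgS : ∀ t ∈ Icc 0 T, g t ∈ S) :
    ∀ t ∈ Icc 0 T, dist (f t) (g t) ≤ dist (f 0) (g 0) * exp (K * t) := by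
  simpa using dist_le_of_trajectories_ODE_of_mem (v := fun _ => F) (s := fun _ => S)
    (fun _ _ => hF) (hf.continuousOn.mono Icc_subset_Ici_self)
    (fun t ht => hf.hasDerivWithinAt_Ici ht.1) (fun t ht => hfS t (Ico_subset_Icc_self ht))
    (hg.continuousOn.mono Icc_subset_Ici_self)
    (fun t ht => hg.hasDerivWithinAt_Ici ht.1) (fun t ht => hgS t (Ico_subset_Icc_self ht))
    le_rfl

variable [ProperSpace E]

theorem eqOn_of_locallyLipschitz (hF : LocallyLipschitz F) (hf : IsForwardSolution F f)
    (hg : IsForwardSolution F g) (h0 : f 0 = g 0) : EqOn f g (Ici 0) := by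
  intro t ht
  obtain ⟨M, hM⟩ := hf.exists_bound t
  obtain ⟨N, hN⟩ := hg.exists_bound t
  obtain ⟨K, hK⟩ := hF.locallyLipschitzOn.exists_lipschitzOnWith_of_compact
    (isCompact_closedBall (0 : E) (max M N))
  have := hf.dist_le_of_lipschitzOnWith hK hg
    (fun s hs => mem_closedBall_zero_iff.2 ((hM s hs).trans (le_max_left _ _)))
    (fun s hs => mem_closedBall_zero_iff.2 ((hN s hs).trans (le_max_right _ _)))
    t ⟨ht, le_rfl⟩
  rwa [h0, dist_self, zero_mul, dist_le_zero] at this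

theorem exists_forall_dist_le (hF : LocallyLipschitz F) (hg : IsForwardSolution F g)
    {T ε : ℝ} (hT : 0 ≤ T) (hε : 0 < ε) :
    ∃ δ > 0, ∀ f, IsForwardSolution F f → dist (f 0) (g 0) < δ →
      ∀ t ∈ Icc 0 T, dist (f t) (g t) ≤ ε := by
  obtain ⟨M, hM⟩ := hg.exists_bound T
  set R := M + 2 * ε
  obtain ⟨K, hK⟩ := hF.locallyLipschitzOn.exists_lipschitzOnWith_of_compact
    (isCompact_closedBall (0 : E) R)
  have hδε : ε * exp (-(K * T)) ≤ ε :=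
    mul_le_of_le_one_right hε.le (exp_le_one_iff.2 (by simp only [neg_nonpos]; positivity))
  refine ⟨ε * exp (-(K * T)), by positivity, fun f hf h0 => ?_⟩
  have hnorm : ∀ t ∈ Icc 0 T, dist (f t) (g t) ≤ ε → ‖f t‖ < R := fun t ht h => by
    linarith [norm_le_norm_add_norm_sub' (f t) (g t), hM t ht, dist_eq_norm (f t) (g t)]
  -- Gronwall's estimate holds as long as `f` stays in the ball where `K` is a Lipschitz constant
  have hclose : ∀ t ∈ Icc 0 T, (∀ s ∈ Icc 0 t, ‖f s‖ ≤ R) →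
      ∀ s ∈ Icc 0 t, dist (f s) (g s) ≤ ε := fun t ht hfR s hs =>
    calc dist (f s) (g s) ≤ dist (f 0) (g 0) * exp (K * s) :=
          hf.dist_le_of_lipschitzOnWith hK hg
            (fun u hu => mem_closedBall_zero_iff.2 (hfR u hu))
            (fun u hu => mem_closedBall_zero_iff.2
              ((hM u ⟨hu.1, hu.2.trans ht.2⟩).trans (by linarith))) s hs
      _ ≤ ε * exp (-(K * T)) * exp (K * T) := by
          gcongr
          exact hs.2.trans ht.2
      _ = ε := by rw [mul_assoc, ← exp_add, neg_add_cancel, exp_zero, mul_one]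
  have hfR := (hf.continuousOn.mono Icc_subset_Ici_self).norm.forall_lt_of_bootstrap
    (hnorm 0 ⟨le_rfl, hT⟩ (h0.le.trans hδε))
    fun t ht h => hnorm t ht (hclose t ht h t ⟨ht.1, le_rfl⟩)
  exact hclose T ⟨hT, le_rfl⟩ fun s hs => (hfR s hs).le

end IsForwardSolution

structure IsForwardFlow (F : E → E) (Efl : E → ℝ → E) : Prop where
  apply_zero : ∀ e, Efl e 0 = e
  isForwardSolution : ∀ e, IsForwardSolution F (Efl e)

namespace IsForwardFlow

variable [ProperSpace E] {F : E → E} {Efl : E → ℝ → E} {k₁ lam r : ℝ}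

theorem apply_add (hE : IsForwardFlow F Efl) (hF : LocallyLipschitz F) (e : E) {T t : ℝ}
    (hT : 0 ≤ T) (ht : 0 ≤ t) : Efl e (T + t) = Efl (Efl e T) t :=
  ((hE.isForwardSolution e).comp_const_add hT).eqOn_of_locallyLipschitz hF
    (hE.isForwardSolution _) (by simp [hE.apply_zero]) ht

theorem norm_apply_le_of_norm_apply_le (hE : IsForwardFlow F Efl) (hF : LocallyLipschitz F)
    (hk₁ : 0 ≤ k₁) (hlam : 0 ≤ lam) (hLES : IsExpGainOn Efl lam r k₁) {e : E} {T M : ℝ}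
    (hT : 0 ≤ T) (hM : ∀ t ∈ Icc 0 T, ‖Efl e t‖ ≤ M) (hr : ‖Efl e T‖ ≤ r)
    {t : ℝ} (ht : 0 ≤ t) :
    ‖Efl e t‖ ≤ max M (k₁ * r) * exp (lam * T) * exp (-lam * t) := by
  have hM0 : 0 ≤ max M (k₁ * r) :=
    le_max_of_le_left ((norm_nonneg _).trans (hM 0 ⟨le_rfl, hT⟩))
  rw [mul_assoc, ← exp_add]
  rcases le_or_gt t T with htT | hTt
  · calc ‖Efl e t‖ ≤ max M (k₁ * r) * 1 := by
          rw [mul_one]; exact (hM t ⟨ht, htT⟩).trans (le_max_left _ _)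
      _ ≤ max M (k₁ * r) * exp (lam * T + -lam * t) := by
          gcongr; exact one_le_exp (by nlinarith)
  · calc ‖Efl e t‖ = ‖Efl (Efl e T) (t - T)‖ := by
          rw [← hE.apply_add hF e hT (by linarith), add_sub_cancel]
      _ ≤ k₁ * exp (-lam * (t - T)) * ‖Efl e T‖ := hLES _ _ (by linarith) hr
      _ ≤ k₁ * r * exp (lam * T + -lam * t) := by
          rw [show lam * T + -lam * t = -lam * (t - T) by ring, mul_right_comm]
          gcongr
      _ ≤ max M (k₁ * r) * exp (lam * T + -lam * t) := by gcongr; exact le_max_right _ _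

theorem exists_eventually_norm_apply_le (hE : IsForwardFlow F Efl) (hF : LocallyLipschitz F)
    (hk₁ : 0 ≤ k₁) (hlam : 0 ≤ lam) (hr : 0 < r) (hLES : IsExpGainOn Efl lam r k₁)
    (hGA : ∀ e, Tendsto (fun t => ‖Efl e t‖) atTop (𝓝 0)) (e₀ : E) :
    ∃ C, ∀ᶠ e in 𝓝 e₀, ∀ t, 0 ≤ t → ‖Efl e t‖ ≤ C * exp (-lam * t) := by
  obtain ⟨T, hT₀, hT⟩ :=
    ((eventually_ge_atTop 0).and ((hGA e₀).eventually_le_const (half_pos hr))).exists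
  obtain ⟨M, hM⟩ := (hE.isForwardSolution e₀).exists_bound T
  obtain ⟨δ, hδ, hclose⟩ :=
    (hE.isForwardSolution e₀).exists_forall_dist_le hF hT₀ (half_pos hr)
  -- states `δ`-close to `e₀` follow its trajectory within `r / 2` up to the time `T` at which
  -- it is in the ball of radius `r / 2`, so they are in the ball of radius `r` at time `T`
  refine ⟨_, eventually_nhds_iff_ball.2 ⟨δ, hδ, fun e he t ht =>
    hE.norm_apply_le_of_norm_apply_le hF hk₁ hlam hLES hT₀ (M := M + r / 2)
      (fun s hs => ?_) ?_ ht⟩⟩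
  all_goals
    have := hclose (Efl e) (hE.isForwardSolution e) (by simpa [hE.apply_zero] using he)
  · linarith [norm_le_norm_add_norm_sub' (Efl e s) (Efl e₀ s), hM s hs, this s hs,
      dist_eq_norm (Efl e s) (Efl e₀ s)]
  · linarith [norm_le_norm_add_norm_sub' (Efl e T) (Efl e₀ T), this T ⟨hT₀, le_rfl⟩,
      dist_eq_norm (Efl e T) (Efl e₀ T)]

theorem exists_norm_apply_le_of_isCompact (hE : IsForwardFlow F Efl) (hF : LocallyLipschitz F)
    (hk₁ : 0 ≤ k₁) (hlam : 0 ≤ lam) (hr : 0 < r) (hLES : IsExpGainOn Efl lam r k₁)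
    (hGA : ∀ e, Tendsto (fun t => ‖Efl e t‖) atTop (𝓝 0)) {S : Set E} (hS : IsCompact S) :
    ∃ C, ∀ e ∈ S, ∀ t, 0 ≤ t → ‖Efl e t‖ ≤ C * exp (-lam * t) := by
  refine hS.induction_on ⟨0, by simp⟩
    (fun U V hUV ⟨C, hC⟩ => ⟨C, fun e he => hC e (hUV he)⟩)
    (fun U V ⟨C, hC⟩ ⟨D, hD⟩ => ⟨max C D, ?_⟩) fun e₀ _ => ?_
  · rintro e (he | he) t ht
    · exact (hC e he t ht).trans (by gcongr; exact le_max_left _ _)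
    · exact (hD e he t ht).trans (by gcongr; exact le_max_right _ _)
  · obtain ⟨C, hC⟩ := hE.exists_eventually_norm_apply_le hF hk₁ hlam hr hLES hGA e₀
    exact ⟨_, mem_nhdsWithin_of_mem_nhds hC, C, fun e he => he⟩

theorem exists_isExpGainOn (hE : IsForwardFlow F Efl) (hF : LocallyLipschitz F)
    (hk₁ : 0 ≤ k₁) (hlam : 0 ≤ lam) (hr : 0 < r) (hLES : IsExpGainOn Efl lam r k₁)
    (hGA : ∀ e, Tendsto (fun t => ‖Efl e t‖) atTop (𝓝 0)) (R : ℝ) :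
    ∃ c, 0 ≤ c ∧ IsExpGainOn Efl lam R c := by
  obtain ⟨C, hC⟩ := hE.exists_norm_apply_le_of_isCompact hF hk₁ hlam hr hLES hGA
    (isCompact_closedBall 0 R)
  refine ⟨max k₁ (C / r), le_max_of_le_left hk₁, fun e t ht he => ?_⟩
  rcases le_or_gt ‖e‖ r with her | hre
  · exact (hLES e t ht her).trans (by gcongr; exact le_max_left _ _)
  · have hCe := hC e (mem_closedBall_zero_iff.2 he) t ht
    have hC0 : 0 ≤ C := nonneg_of_mul_nonneg_left ((norm_nonneg _).trans hCe) (exp_pos _)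
    calc ‖Efl e t‖ ≤ C / r * exp (-lam * t) * r := by
          rwa [mul_right_comm, div_mul_cancel₀ _ hr.ne']
      _ ≤ max k₁ (C / r) * exp (-lam * t) * ‖e‖ := by
          gcongr
          exact le_max_right _ _

end IsForwardFlow

end ODE

theorem les_ga_exp_estimate
    {n : ℕ}
    (F : Euc n → Euc n) (hF : ContDiff ℝ 1 F)
    (Efl : Euc n → ℝ → Euc n)
    (hinit : ∀ e, Efl e 0 = e)
    (hflow : ∀ e t, 0 ≤ t → HasDerivWithinAt (Efl e) (F (Efl e t)) (Ici 0) t)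
    -- local exponential stability
    (k1 lam1 r1 : ℝ) (hk1 : 0 < k1) (hlam1 : 0 < lam1) (hr1 : 0 < r1)
    (hLES : ∀ e t, 0 ≤ t → ‖e‖ ≤ r1 → ‖Efl e t‖ ≤ k1 * exp (-lam1 * t) * ‖e‖)
    -- global attractivity
    (hGA : ∀ e, Tendsto (fun t => ‖Efl e t‖) atTop (𝓝 0)) :
    ∃ lam > (0:ℝ), ∃ k : ℝ → ℝ,
      ContinuousOn k (Ici 0) ∧ StrictMonoOn k (Ici 0) ∧ (∀ s, 0 ≤ s → 0 ≤ k s) ∧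
      ∀ e t, 0 ≤ t → ‖Efl e t‖ ≤ k ‖e‖ * exp (-lam * t) * ‖e‖ := by
  have hE : IsForwardFlow F Efl := ⟨hinit, hflow⟩
  have hgain := hE.exists_isExpGainOn hF.locallyLipschitz hk1.le hlam1.le hr1 hLES hGA
  obtain ⟨k, hk_cont, hk_mono, hk_gt⟩ :=
    (monotone_expGain hgain).exists_continuous_strictMono_lt
  refine ⟨lam1, hlam1, k, hk_cont.continuousOn, hk_mono.strictMonoOn _,
    fun s _ => (expGain_nonneg s).trans (hk_gt s).le, fun e t ht => ?_⟩
  calc ‖Efl e t‖ ≤ expGain Efl lam1 ‖e‖ * exp (-lam1 * t) * ‖e‖ :=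
        isExpGainOn_expGain hgain ‖e‖ e t ht le_rfl
    _ ≤ k ‖e‖ * exp (-lam1 * t) * ‖e‖ := by gcongr; exact (hk_gt _).le
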